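/- arXiv:2602.11557 — 7 statements merged into one kernel-verified Lean document; each statement's English description precedes it below -/
import Mathlib

section
/- For every k ≥ 1, all vectors v, v' ∈ ℝ^k, and every index c ∈ {1,…,k}, the softmax components satisfy |S_c(v')/S_c(v) − 1| ≤ exp(2‖v − v'‖_∞) − 1. -/
open Finset Filter

/-- Softmax map on `ℝ^k`. -/
noncomputable def softmax {k : ℕ} (z : Fin k → ℝ) (c : Fin k) : ℝ :=
  Real.exp (z c) / ∑ j, Real.exp (z j)

/-- Logits `W x` of a linear classifier `W : ℝ^{k×d}` on input `x : ℝ^d`. -/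
noncomputable def logits {k d : ℕ} (W : Fin k → Fin d → ℝ) (x : Fin d → ℝ) : Fin k → ℝ :=
  fun c => ∑ j, W c j * x j

/-- Cross-entropy loss `L(W) = -(1/n) ∑ᵢ log S_{yᵢ}(W xᵢ)`. -/
noncomputable def lossCE {n k d : ℕ} (x : Fin n → Fin d → ℝ) (y : Fin n → Fin k)
    (W : Fin k → Fin d → ℝ) : ℝ :=
  -((1 : ℝ) / n) * ∑ i, Real.log (softmax (logits W (x i)) (y i))

/-- Proxy function `G(W) = (1/n) ∑ᵢ (1 - S_{yᵢ}(W xᵢ))`. -/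
noncomputable def proxyG {n k d : ℕ} (x : Fin n → Fin d → ℝ) (y : Fin n → Fin k)
    (W : Fin k → Fin d → ℝ) : ℝ :=
  ((1 : ℝ) / n) * ∑ i, (1 - softmax (logits W (x i)) (y i))

/-- Per-sample gradient matrix `gᵢ(W) = (S(W xᵢ) - e_{yᵢ}) xᵢᵀ`. -/
noncomputable def sampleGrad {k d : ℕ} (x : Fin d → ℝ) (y : Fin k)
    (W : Fin k → Fin d → ℝ) : Fin k → Fin d → ℝ :=
  fun c j => (softmax (logits W x) c - (if c = y then 1 else 0)) * x j

/-- Full gradient matrix `D(W) = (1/n) ∑ᵢ gᵢ(W)`. -/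
noncomputable def gradCE {n k d : ℕ} (x : Fin n → Fin d → ℝ) (y : Fin n → Fin k)
    (W : Fin k → Fin d → ℝ) : Fin k → Fin d → ℝ :=
  fun c j => ((1 : ℝ) / n) * ∑ i, sampleGrad (x i) (y i) W c j

/-- Entry-wise 1-norm of a matrix. -/
noncomputable def norm1M {k d : ℕ} (A : Fin k → Fin d → ℝ) : ℝ :=
  ∑ c, ∑ j, |A c j|

/-- 1-norm of a vector. -/
noncomputable def norm1V {d : ℕ} (v : Fin d → ℝ) : ℝ := ∑ j, |v j|

/-- `min_{c ≠ y} (e_y - e_c)ᵀ A x`. -/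
noncomputable def marginMin {k d : ℕ} (hk : 2 ≤ k) (A : Fin k → Fin d → ℝ)
    (x : Fin d → ℝ) (y : Fin k) : ℝ :=
  (Finset.univ.erase y).inf'
    (by
      obtain ⟨cne, hcne⟩ := Fintype.exists_ne_of_one_lt_card
        (by simpa using (by omega : 1 < k)) y
      exact ⟨cne, Finset.mem_erase.mpr ⟨hcne, Finset.mem_univ _⟩⟩)
    (fun c => logits A x y - logits A x c)

/-- `min_{i ∈ [n], c ≠ yᵢ} (e_{yᵢ} - e_c)ᵀ W xᵢ`. -/
noncomputable def dataMargin {n k d : ℕ} (hn : 1 ≤ n) (hk : 2 ≤ k)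
    (x : Fin n → Fin d → ℝ) (y : Fin n → Fin k) (W : Fin k → Fin d → ℝ) : ℝ :=
  Finset.univ.inf' ⟨⟨0, by omega⟩, Finset.mem_univ _⟩
    (fun i => marginMin hk W (x i) (y i))

/-- Max margin `γ` over the max-norm unit ball. -/
noncomputable def gammaMax {n k d : ℕ} (hn : 1 ≤ n) (hk : 2 ≤ k)
    (x : Fin n → Fin d → ℝ) (y : Fin n → Fin k) : ℝ :=
  sSup { g : ℝ | ∃ W' : Fin k → Fin d → ℝ, ‖W'‖ ≤ 1 ∧ g = dataMargin hn hk x y W' }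

/-- Mini-batch gradient `(1/b) ∑_{i ∈ B} gᵢ(W)`. -/
noncomputable def batchGrad {n k d : ℕ} (x : Fin n → Fin d → ℝ) (y : Fin n → Fin k)
    (B : Finset (Fin n)) (b : ℕ) (W : Fin k → Fin d → ℝ) : Fin k → Fin d → ℝ :=
  fun c j => ((1 : ℝ) / b) * ∑ i ∈ B, sampleGrad (x i) (y i) W c j

/-- Frobenius norm of a matrix. -/
noncomputable def frobNorm {k d : ℕ} (A : Fin k → Fin d → ℝ) : ℝ :=
  Real.sqrt (∑ c, ∑ j, (A c j) ^ 2)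

open Real

/-- The lower side holds because `1 - exp (-t) ≤ t ≤ exp t - 1`. -/
lemma abs_sub_one_le_exp_sub_one {r t : ℝ} (hlo : exp (-t) ≤ r) (hhi : r ≤ exp t) :
    |r - 1| ≤ exp t - 1 := by
  have h₁ := add_one_le_exp t
  have h₂ := add_one_le_exp (-t)
  rw [abs_le]
  constructor <;> linarith

lemma sum_exp_le_exp_mul_sum_exp {ι : Type*} [Fintype ι] {u w : ι → ℝ} {ε : ℝ}
    (h : ∀ j, u j ≤ w j + ε) : ∑ j, exp (u j) ≤ exp ε * ∑ j, exp (w j) := by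
  rw [mul_sum]
  gcongr with j
  rw [← exp_add]
  exact exp_le_exp.2 (by linarith [h j])

lemma sum_exp_pos {ι : Type*} [Fintype ι] [Nonempty ι] (v : ι → ℝ) : 0 < ∑ j, exp (v j) :=
  sum_pos (fun _ _ => exp_pos _) univ_nonempty

lemma softmax_pos {k : ℕ} (v : Fin k → ℝ) (c : Fin k) : 0 < softmax v c :=
  have : Nonempty (Fin k) := ⟨c⟩
  div_pos (exp_pos _) (sum_exp_pos v)

/-- Numerator and denominator of `softmax` each move by a factor of at most `exp ε`. -/
lemma softmax_le_exp_two_mul_softmax {k : ℕ} {v v' : Fin k → ℝ} {ε : ℝ}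
    (h : ∀ j, |v' j - v j| ≤ ε) (c : Fin k) :
    softmax v' c ≤ exp (2 * ε) * softmax v c := by
  have : Nonempty (Fin k) := ⟨c⟩
  have hnum : exp (v' c) ≤ exp ε * exp (v c) := by
    rw [← exp_add]
    exact exp_le_exp.2 (by linarith [(abs_le.1 (h c)).2])
  have hden : ∑ j, exp (v j) ≤ exp ε * ∑ j, exp (v' j) :=
    sum_exp_le_exp_mul_sum_exp fun j => by linarith [(abs_le.1 (h j)).1]
  rw [softmax, softmax, mul_div_assoc', div_le_div_iff₀ (sum_exp_pos v') (sum_exp_pos v)]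
  calc exp (v' c) * ∑ j, exp (v j)
      ≤ (exp ε * exp (v c)) * (exp ε * ∑ j, exp (v' j)) := by gcongr
    _ = exp (2 * ε) * exp (v c) * ∑ j, exp (v' j) := by rw [two_mul, exp_add]; ring

theorem softmax_ratio_bound_general (k : ℕ) (v v' : Fin k → ℝ) (c : Fin k) :
    |softmax v' c / softmax v c - 1| ≤ Real.exp (2 * ‖v - v'‖) - 1 := by
  have hcoord : ∀ j, |v' j - v j| ≤ ‖v - v'‖ := fun j => by
    simpa [abs_sub_comm] using norm_le_pi_norm (v - v') j
  have hcoord' : ∀ j, |v j - v' j| ≤ ‖v - v'‖ := fun j => by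
    simpa using norm_le_pi_norm (v - v') j
  have hpos := softmax_pos v c
  apply abs_sub_one_le_exp_sub_one
  · rw [le_div_iff₀ hpos, exp_neg, inv_mul_le_iff₀ (exp_pos _)]
    exact softmax_le_exp_two_mul_softmax hcoord' c
  · exact (div_le_iff₀ hpos).2 (softmax_le_exp_two_mul_softmax hcoord c)

/-- stability of softmax components,
`|S_c(v')/S_c(v) − 1| ≤ exp(2‖v − v'‖_∞) − 1`. -/
theorem softmax_ratio_bound (k : ℕ) (hk : 1 ≤ k) (v v' : Fin k → ℝ) (c : Fin k) :
    |softmax v' c / softmax v c - 1| ≤ Real.exp (2 * ‖v - v'‖) - 1 :=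
  softmax_ratio_bound_general k v v' c
end

section
/- For every k ≥ 2, all vectors v, v' ∈ ℝ^k, and every index c ∈ {1,…,k}, the complements of the softmax components satisfy |(1 − S_c(v'))/(1 − S_c(v)) − 1| ≤ exp(2‖v − v'‖_∞) − 1. -/
open Finset Filter

/-!
Since `1 - S_c(z) = (∑_{j ≠ c} e^{z_j}) / ∑_j e^{z_j}`, the logarithm of the ratio
`(1 - S_c(v')) / (1 - S_c(v))` is a difference of two increments of log-sum-exp, each over a
nonempty index set. Log-sum-exp is `1`-Lipschitz for the sup norm, so this logarithm is at most
`2‖v - v'‖` in absolute value, and `|e^x - 1| ≤ e^{|x|} - 1` finishes the proof.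
-/

open Real

theorem abs_exp_sub_one_le_exp_abs_sub_one (x : ℝ) : |exp x - 1| ≤ exp |x| - 1 := by
  rcases le_total 0 x with hx | hx
  · rw [abs_of_nonneg hx, abs_of_nonneg (by linarith [add_one_le_exp x])]
  · have hprod : exp x * exp (-x) = 1 := by rw [← exp_add, add_neg_cancel, exp_zero]
    rw [abs_of_nonpos hx, abs_of_nonpos (by linarith [exp_le_one_iff.2 hx])]
    nlinarith [sq_nonneg (exp x - 1), exp_pos (-x), exp_pos x]

section LogSumExp

variable {ι : Type*} {s : Finset ι} {f g : ι → ℝ} {t : ℝ}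

theorem sum_exp_le_exp_mul_sum_exp_s2 (h : ∀ j ∈ s, f j ≤ g j + t) :
    ∑ j ∈ s, exp (f j) ≤ exp t * ∑ j ∈ s, exp (g j) := by
  rw [mul_sum]
  gcongr with j hj
  rw [← exp_add]
  exact exp_le_exp.2 (by linarith [h j hj])

theorem log_sum_exp_le_log_sum_exp_add (hs : s.Nonempty) (h : ∀ j ∈ s, f j ≤ g j + t) :
    log (∑ j ∈ s, exp (f j)) ≤ log (∑ j ∈ s, exp (g j)) + t := by
  have hg : 0 < ∑ j ∈ s, exp (g j) := sum_pos (fun j _ => exp_pos _) hs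
  calc log (∑ j ∈ s, exp (f j)) ≤ log (exp t * ∑ j ∈ s, exp (g j)) :=
        log_le_log (sum_pos (fun j _ => exp_pos _) hs) (sum_exp_le_exp_mul_sum_exp_s2 h)
    _ = log (∑ j ∈ s, exp (g j)) + t := by
        rw [log_mul (exp_pos t).ne' hg.ne', log_exp, add_comm]

theorem abs_log_sum_exp_sub_log_sum_exp_le (hs : s.Nonempty) (h : ∀ j ∈ s, |f j - g j| ≤ t) :
    |log (∑ j ∈ s, exp (f j)) - log (∑ j ∈ s, exp (g j))| ≤ t := by
  have hfg := log_sum_exp_le_log_sum_exp_add hs (f := f) (g := g) (t := t)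
    fun j hj => by linarith [(abs_le.1 (h j hj)).2]
  have hgf := log_sum_exp_le_log_sum_exp_add hs (f := g) (g := f) (t := t)
    fun j hj => by linarith [(abs_le.1 (h j hj)).1]
  exact abs_sub_le_iff.2 ⟨by linarith, by linarith⟩

end LogSumExp

theorem Fin.univ_erase_nonempty {k : ℕ} (hk : 2 ≤ k) (c : Fin k) : (univ.erase c).Nonempty :=
  (univ_nontrivial (h := Fin.nontrivial_iff_two_le.2 hk)).erase_nonempty

section Softmax

variable {k : ℕ} (z : Fin k → ℝ) (c : Fin k)

theorem one_sub_softmax_eq :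
    1 - softmax z c = (∑ j ∈ univ.erase c, exp (z j)) / ∑ j, exp (z j) := by
  have hpos : 0 < ∑ j, exp (z j) := sum_pos (fun j _ => exp_pos _) ⟨c, mem_univ c⟩
  rw [softmax, eq_div_iff hpos.ne', sub_mul, one_mul, div_mul_cancel₀ _ hpos.ne',
    ← add_sum_erase _ _ (mem_univ c), add_sub_cancel_left]

variable {z c}

theorem one_sub_softmax_pos (hk : 2 ≤ k) : 0 < 1 - softmax z c := by
  rw [one_sub_softmax_eq]
  exact div_pos (sum_pos (fun j _ => exp_pos _) (Fin.univ_erase_nonempty hk c))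
    (sum_pos (fun j _ => exp_pos _) ⟨c, mem_univ c⟩)

theorem log_one_sub_softmax (hk : 2 ≤ k) :
    log (1 - softmax z c) = log (∑ j ∈ univ.erase c, exp (z j)) - log (∑ j, exp (z j)) := by
  rw [one_sub_softmax_eq, log_div
    (sum_pos (fun j _ => exp_pos _) (Fin.univ_erase_nonempty hk c)).ne'
    (sum_pos (fun j _ => exp_pos _) ⟨c, mem_univ c⟩).ne']

end Softmax

/-- stability of softmax complements,
`|(1 − S_c(v'))/(1 − S_c(v)) − 1| ≤ exp(2‖v − v'‖_∞) − 1`. -/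
theorem softmax_complement_ratio_bound (k : ℕ) (hk : 2 ≤ k) (v v' : Fin k → ℝ)
    (c : Fin k) :
    |(1 - softmax v' c) / (1 - softmax v c) - 1| ≤ Real.exp (2 * ‖v - v'‖) - 1 := by
  have hcoord (j : Fin k) : |v' j - v j| ≤ ‖v - v'‖ := by
    simpa [abs_sub_comm, Real.norm_eq_abs] using norm_le_pi_norm (v - v') j
  have hlog : |log ((1 - softmax v' c) / (1 - softmax v c))| ≤ 2 * ‖v - v'‖ := by
    rw [log_div (one_sub_softmax_pos hk).ne' (one_sub_softmax_pos hk).ne',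
      log_one_sub_softmax hk, log_one_sub_softmax hk]
    have hrest := abs_log_sum_exp_sub_log_sum_exp_le (Fin.univ_erase_nonempty hk c)
      fun j _ => hcoord j
    have hall := abs_log_sum_exp_sub_log_sum_exp_le ⟨c, mem_univ c⟩ fun j _ => hcoord j
    calc _ = |(log (∑ j ∈ univ.erase c, exp (v' j)) - log (∑ j ∈ univ.erase c, exp (v j)))
            - (log (∑ j, exp (v' j)) - log (∑ j, exp (v j)))| := by ring_nf
      _ ≤ _ := (abs_sub _ _).trans (by linarith)
  have hratio : 0 < (1 - softmax v' c) / (1 - softmax v c) :=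
    div_pos (one_sub_softmax_pos hk) (one_sub_softmax_pos hk)
  calc _ = |exp (log ((1 - softmax v' c) / (1 - softmax v c))) - 1| := by rw [exp_log hratio]
    _ ≤ _ := (abs_exp_sub_one_le_exp_abs_sub_one _).trans (by gcongr)
end

section
/- Let s ∈ ℝ^k be a probability vector (s_j ≥ 0 for all j and ∑_{j=1}^k s_j = 1). Then for every index c ∈ {1,…,k} and every vector v ∈ ℝ^k, the quadratic form of the softmax Hessian satisfies vᵀ (diag(s) − s sᵀ) v ≤ 4 (1 − s_c) (max_j |v[j]|)². -/
open Finset Filter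

/-!
The quadratic form `vᵀ (diag s − s sᵀ) v` is the variance of `v` under the distribution `s`,
hence at most the second moment of `v` about `v c`. In that moment the index `c` contributes
nothing, the other indices carry total mass `1 − s c`, and each `(v i − v c)²` is at most `(2‖v‖)²`.
-/

theorem sum_sum_mul_diagonal_sub_vecMulVec_mul {ι R : Type*} [Fintype ι] [DecidableEq ι]
    [CommRing R] (s v : ι → R) :
    ∑ i, ∑ j, v i * (Matrix.diagonal s - Matrix.vecMulVec s s) i j * v j
      = ∑ i, s i * v i ^ 2 - (∑ i, s i * v i) ^ 2 := by
  simp only [Matrix.sub_apply, Matrix.diagonal_apply, Matrix.vecMulVec_apply, mul_sub, sub_mul,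
    Finset.sum_sub_distrib, mul_ite, ite_mul, mul_zero, zero_mul, Finset.sum_ite_eq,
    Finset.mem_univ, if_true, sq, Finset.sum_mul_sum]
  congr 1
  · exact Finset.sum_congr rfl fun i _ => by ring
  · exact Finset.sum_congr rfl fun i _ => Finset.sum_congr rfl fun j _ => by ring

theorem sum_mul_sq_sub_eq {ι R : Type*} [Fintype ι] [CommRing R] {s : ι → R}
    (hsum : ∑ i, s i = 1) (v : ι → R) (a : R) :
    ∑ i, s i * (v i - a) ^ 2
      = (∑ i, s i * v i ^ 2 - (∑ i, s i * v i) ^ 2) + (∑ i, s i * v i - a) ^ 2 := by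
  have expand : ∀ i, s i * (v i - a) ^ 2 = s i * v i ^ 2 - 2 * a * (s i * v i) + a ^ 2 * s i :=
    fun i => by ring
  simp only [expand, Finset.sum_add_distrib, Finset.sum_sub_distrib, ← Finset.mul_sum, hsum]
  ring

theorem sum_mul_sq_sub_sq_sum_mul_le {ι R : Type*} [Fintype ι] [CommRing R] [LinearOrder R]
    [IsStrictOrderedRing R] {s : ι → R} (hsum : ∑ i, s i = 1) (v : ι → R) (a : R) :
    ∑ i, s i * v i ^ 2 - (∑ i, s i * v i) ^ 2 ≤ ∑ i, s i * (v i - a) ^ 2 := by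
  rw [sum_mul_sq_sub_eq hsum]
  exact le_add_of_nonneg_right (sq_nonneg _)

theorem sub_apply_sq_le {ι : Type*} [Fintype ι] (v : ι → ℝ) (i j : ι) :
    (v i - v j) ^ 2 ≤ (2 * ‖v‖) ^ 2 := by
  have h : ‖v i - v j‖ ≤ 2 * ‖v‖ := by
    linarith [norm_sub_le (v i) (v j), norm_le_pi_norm v i, norm_le_pi_norm v j]
  simpa only [Real.norm_eq_abs, sq_abs] using pow_le_pow_left₀ (norm_nonneg _) h 2

theorem sum_mul_sq_sub_apply_le {ι : Type*} [Fintype ι] [DecidableEq ι] {s : ι → ℝ}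
    (hs : ∀ i, 0 ≤ s i) (v : ι → ℝ) (c : ι) :
    ∑ i, s i * (v i - v c) ^ 2 ≤ (∑ i, s i - s c) * (2 * ‖v‖) ^ 2 := by
  rw [← Finset.sum_erase univ (a := c) (f := fun i => s i * (v i - v c) ^ 2) (by simp),
    ← Finset.sum_erase_eq_sub (Finset.mem_univ c), Finset.sum_mul]
  exact Finset.sum_le_sum fun i _ => mul_le_mul_of_nonneg_left (sub_apply_sq_le v i c) (hs i)

/-- softmax Hessian quadratic form bound
`vᵀ (diag s − s sᵀ) v ≤ 4 (1 − s_c) (max_j |v_j|)²`. -/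
theorem softmax_hessian_quadratic_bound (k : ℕ) (s : Fin k → ℝ)
    (hs : ∀ j, 0 ≤ s j) (hsum : ∑ j, s j = 1) (c : Fin k) (v : Fin k → ℝ) :
    ∑ i, ∑ j, v i * ((Matrix.diagonal s - Matrix.vecMulVec s s) i j) * v j
      ≤ 4 * (1 - s c) * ‖v‖ ^ 2 := by
  rw [sum_sum_mul_diagonal_sub_vecMulVec_mul]
  calc ∑ i, s i * v i ^ 2 - (∑ i, s i * v i) ^ 2
      ≤ ∑ i, s i * (v i - v c) ^ 2 := sum_mul_sq_sub_sq_sum_mul_le hsum v (v c)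
    _ ≤ (∑ i, s i - s c) * (2 * ‖v‖) ^ 2 := sum_mul_sq_sub_apply_le hs v c
    _ = 4 * (1 - s c) * ‖v‖ ^ 2 := by rw [hsum]; ring
end

section
/- For every W ∈ ℝ^{k×d} and every A ∈ ℝ^{k×d}, the inner product of A with the negative loss gradient satisfies ⟨A, −D(W)⟩ ≥ (1/n)∑_{i=1}^n (1 − S_{y_i}(W x_i)) · min_{c ≠ y_i} (e_{y_i} − e_c)ᵀ A x_i. -/
open Finset Filter

/-!
Writing `g = S - e_y` for one sample, `⟨A, -g xᵀ⟩ = ∑_c (e_y - S)_c (A x)_c`. Since the softmax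
weights sum to one this equals `∑_c S_c ((A x)_y - (A x)_c)`, where the term `c = y` vanishes
and every other margin is at least the minimal one; the remaining weights sum to `1 - S_y`.
-/

lemma softmax_nonneg {k : ℕ} (z : Fin k → ℝ) (c : Fin k) : 0 ≤ softmax z c := by
  unfold softmax; positivity

lemma sum_softmax {k : ℕ} (hk : 0 < k) (z : Fin k → ℝ) : ∑ c, softmax z c = 1 := by
  have hpos : 0 < ∑ j, Real.exp (z j) :=
    sum_pos (fun j _ => Real.exp_pos _) ⟨⟨0, hk⟩, mem_univ _⟩
  simp only [softmax, ← sum_div, div_self hpos.ne']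

lemma marginMin_le {k d : ℕ} (hk : 2 ≤ k) (A : Fin k → Fin d → ℝ) (x : Fin d → ℝ)
    {y c : Fin k} (hc : c ≠ y) : marginMin hk A x y ≤ logits A x y - logits A x c :=
  inf'_le _ (mem_erase.mpr ⟨hc, mem_univ c⟩)

lemma sum_ite_sub_mul_eq_sum_mul_sub {ι : Type*} [Fintype ι] [DecidableEq ι] (p v : ι → ℝ)
    (hp : ∑ c, p c = 1) (y : ι) :
    ∑ c, ((if c = y then 1 else 0) - p c) * v c = ∑ c, p c * (v y - v c) := by
  simp only [sub_mul, ite_mul, one_mul, zero_mul, sum_sub_distrib, sum_ite_eq',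
    mem_univ, if_true, mul_sub, ← sum_mul, hp]

lemma one_sub_mul_le_sum_ite_sub_mul {ι : Type*} [Fintype ι] [DecidableEq ι] (p v : ι → ℝ)
    (hp0 : ∀ c, 0 ≤ p c) (hp : ∑ c, p c = 1) (y : ι) {m : ℝ}
    (hm : ∀ c, c ≠ y → m ≤ v y - v c) :
    (1 - p y) * m ≤ ∑ c, ((if c = y then 1 else 0) - p c) * v c := by
  have hrest : ∑ c ∈ univ.erase y, p c = 1 - p y := by
    rw [← hp, ← sum_erase_add _ _ (mem_univ y), add_sub_cancel_right]
  rw [sum_ite_sub_mul_eq_sum_mul_sub p v hp, ← sum_erase_add _ _ (mem_univ y),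
    sub_self, mul_zero, add_zero, ← hrest, sum_mul]
  exact sum_le_sum fun c hc =>
    mul_le_mul_of_nonneg_left (hm c (ne_of_mem_erase hc)) (hp0 c)

lemma sum_mul_sampleGrad {k d : ℕ} (A W : Fin k → Fin d → ℝ) (x : Fin d → ℝ) (y : Fin k) :
    ∑ c, ∑ j, A c j * sampleGrad x y W c j
      = -∑ c, ((if c = y then 1 else 0) - softmax (logits W x) c) * logits A x c := by
  simp only [sampleGrad, logits, mul_sum, ← sum_neg_distrib]
  exact sum_congr rfl fun c _ => sum_congr rfl fun j _ => by ring

lemma sum_mul_gradCE {n k d : ℕ} (x : Fin n → Fin d → ℝ) (y : Fin n → Fin k)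
    (A W : Fin k → Fin d → ℝ) :
    ∑ c, ∑ j, A c j * gradCE x y W c j
      = (1 / n : ℝ) * ∑ i, ∑ c, ∑ j, A c j * sampleGrad (x i) (y i) W c j := by
  simp only [gradCE, mul_sum, mul_left_comm (A _ _)]
  exact (sum_congr rfl fun c _ => sum_comm).trans sum_comm

lemma one_sub_softmax_mul_marginMin_le {k d : ℕ} (hk : 2 ≤ k) (A W : Fin k → Fin d → ℝ)
    (x : Fin d → ℝ) (y : Fin k) :
    (1 - softmax (logits W x) y) * marginMin hk A x y
      ≤ -∑ c, ∑ j, A c j * sampleGrad x y W c j := by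
  rw [sum_mul_sampleGrad, neg_neg]
  exact one_sub_mul_le_sum_ite_sub_mul _ _ (softmax_nonneg _) (sum_softmax (by omega) _) y
    fun c hc => marginMin_le hk A x hc

theorem inner_neg_grad_lower_bound_general (n k d : ℕ)
    (hk : 2 ≤ k)
    (x : Fin n → Fin d → ℝ) (y : Fin n → Fin k)
    (W A : Fin k → Fin d → ℝ) :
    ∑ cc, ∑ j, A cc j * (-(gradCE x y W cc j))
      ≥ ((1 : ℝ) / n) * ∑ i,
          (1 - softmax (logits W (x i)) (y i)) * marginMin hk A (x i) (y i) := by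
  simp only [mul_neg, sum_neg_distrib]
  rw [sum_mul_gradCE, ← mul_neg, ← sum_neg_distrib, ge_iff_le]
  gcongr with i
  exact one_sub_softmax_mul_marginMin_le hk A W (x i) (y i)

/-- `⟨A, −D(W)⟩ ≥ (1/n) ∑ᵢ (1 − S_{yᵢ}(W xᵢ)) · min_{c ≠ yᵢ} (e_{yᵢ} − e_c)ᵀ A xᵢ`. -/
theorem inner_neg_grad_lower_bound (n k d : ℕ)
    (hn : 1 ≤ n) (hk : 2 ≤ k) (hd : 1 ≤ d)
    (x : Fin n → Fin d → ℝ) (y : Fin n → Fin k)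
    (W A : Fin k → Fin d → ℝ) :
    ∑ cc, ∑ j, A cc j * (-(gradCE x y W cc j))
      ≥ ((1 : ℝ) / n) * ∑ i,
          (1 - softmax (logits W (x i)) (y i)) * marginMin hk A (x i) (y i) :=
  inner_neg_grad_lower_bound_general n k d hk x y W A
end

section
/- Suppose ‖x_i‖_1 ≤ R for all i ∈ {1,…,n}, where R > 0. Then for all W, W' ∈ ℝ^{k×d}, the cross-entropy loss satisfies the Lipschitz bound |L(W) − L(W')| ≤ 2R ‖W − W'‖_max. -/
open Finset Filter

/-!
Up to the term `z_y`, `log S_y(z)` is minus the log-sum-exp of `z`, and log-sum-exp is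
1-Lipschitz for the sup norm: if `z ≤ z' + E` coordinatewise then `∑ exp z ≤ exp E * ∑ exp z'`.
Hence each sample's term is 2-Lipschitz in its logits, and the logits `W x` move by at most
`‖x‖₁ ‖W - W'‖_max` in sup norm. Averaging over the samples gives the bound.
-/

noncomputable def logSumExp {ι : Type*} [Fintype ι] (z : ι → ℝ) : ℝ :=
  Real.log (∑ j, Real.exp (z j))

section LogSumExp

variable {ι : Type*} [Fintype ι] [Nonempty ι]

lemma sum_exp_pos_s7 (z : ι → ℝ) : 0 < ∑ j, Real.exp (z j) :=
  Finset.sum_pos (fun _ _ => Real.exp_pos _) Finset.univ_nonempty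

lemma logSumExp_sub_le {z z' : ι → ℝ} {E : ℝ} (h : ∀ j, z j - z' j ≤ E) :
    logSumExp z - logSumExp z' ≤ E := by
  have hle : ∑ j, Real.exp (z j) ≤ Real.exp E * ∑ j, Real.exp (z' j) := by
    rw [Finset.mul_sum]
    refine Finset.sum_le_sum fun j _ => ?_
    rw [← Real.exp_add]
    exact Real.exp_le_exp.mpr (by linarith [h j])
  have := Real.log_le_log (sum_exp_pos_s7 z) hle
  rw [Real.log_mul (Real.exp_ne_zero E) (sum_exp_pos_s7 z').ne', Real.log_exp] at this
  rw [logSumExp, logSumExp]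
  linarith

lemma abs_logSumExp_sub_le (z z' : ι → ℝ) : |logSumExp z - logSumExp z'| ≤ ‖z - z'‖ := by
  have coord_le (u v : ι → ℝ) (j : ι) : u j - v j ≤ ‖u - v‖ :=
    (le_abs_self _).trans (norm_le_pi_norm (u - v) j)
  refine abs_le'.mpr ⟨logSumExp_sub_le (coord_le z z'), ?_⟩
  rw [neg_sub, norm_sub_rev]
  exact logSumExp_sub_le (coord_le z' z)

end LogSumExp

lemma log_softmax {k : ℕ} (z : Fin k → ℝ) (c : Fin k) :
    Real.log (softmax z c) = z c - logSumExp z := by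
  have : Nonempty (Fin k) := ⟨c⟩
  rw [softmax, Real.log_div (Real.exp_ne_zero _) (sum_exp_pos_s7 z).ne', Real.log_exp, logSumExp]

lemma abs_log_softmax_sub_le {k : ℕ} (z z' : Fin k → ℝ) (c : Fin k) :
    |Real.log (softmax z c) - Real.log (softmax z' c)| ≤ 2 * ‖z - z'‖ := by
  have : Nonempty (Fin k) := ⟨c⟩
  rw [log_softmax, log_softmax]
  calc |z c - logSumExp z - (z' c - logSumExp z')|
      = |(z c - z' c) - (logSumExp z - logSumExp z')| := by ring_nf
    _ ≤ |z c - z' c| + |logSumExp z - logSumExp z'| := abs_sub _ _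
    _ ≤ ‖z - z'‖ + ‖z - z'‖ :=
      add_le_add (norm_le_pi_norm (z - z') c) (abs_logSumExp_sub_le z z')
    _ = 2 * ‖z - z'‖ := by ring

lemma logits_sub {k d : ℕ} (W W' : Fin k → Fin d → ℝ) (x : Fin d → ℝ) :
    logits W x - logits W' x = logits (W - W') x := by
  ext c
  simp [logits, sub_mul]

lemma norm1V_nonneg {d : ℕ} (v : Fin d → ℝ) : 0 ≤ norm1V v :=
  Finset.sum_nonneg fun j _ => abs_nonneg (v j)

lemma norm_logits_le {k d : ℕ} (A : Fin k → Fin d → ℝ) (x : Fin d → ℝ) :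
    ‖logits A x‖ ≤ ‖A‖ * norm1V x := by
  refine (pi_norm_le_iff_of_nonneg (mul_nonneg (norm_nonneg A) (norm1V_nonneg x))).mpr
    fun c => ?_
  calc ‖logits A x c‖ = |∑ j, A c j * x j| := rfl
    _ ≤ ∑ j, |A c j * x j| := Finset.abs_sum_le_sum_abs _ _
    _ = ∑ j, |A c j| * |x j| := by simp only [abs_mul]
    _ ≤ ∑ j, ‖A‖ * |x j| := by
      gcongr with j
      exact (norm_le_pi_norm (A c) j).trans (norm_le_pi_norm A c)
    _ = ‖A‖ * norm1V x := by rw [norm1V, Finset.mul_sum]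

lemma abs_log_softmax_logits_sub_le {k d : ℕ} (W W' : Fin k → Fin d → ℝ) (x : Fin d → ℝ)
    (c : Fin k) :
    |Real.log (softmax (logits W x) c) - Real.log (softmax (logits W' x) c)| ≤
      2 * norm1V x * ‖W - W'‖ :=
  calc _ ≤ 2 * ‖logits W x - logits W' x‖ := abs_log_softmax_sub_le _ _ c
    _ ≤ 2 * (‖W - W'‖ * norm1V x) := by
      rw [logits_sub]
      gcongr
      exact norm_logits_le _ _
    _ = 2 * norm1V x * ‖W - W'‖ := by ring

lemma abs_mean_le {n : ℕ} {a : Fin n → ℝ} {B : ℝ} (hB : 0 ≤ B) (ha : ∀ i, |a i| ≤ B) :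
    |(1 / n : ℝ) * ∑ i, a i| ≤ B := by
  rcases Nat.eq_zero_or_pos n with rfl | hn
  · simpa using hB
  have hn' : (0 : ℝ) < n := by exact_mod_cast hn
  rw [abs_mul, abs_of_pos (by positivity), one_div, inv_mul_le_iff₀ hn']
  calc |∑ i, a i| ≤ ∑ i, |a i| := Finset.abs_sum_le_sum_abs _ _
    _ ≤ ∑ _i : Fin n, B := Finset.sum_le_sum fun i _ => ha i
    _ = n * B := by simp

lemma lossCE_sub {n k d : ℕ} (x : Fin n → Fin d → ℝ) (y : Fin n → Fin k)
    (W W' : Fin k → Fin d → ℝ) :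
    lossCE x y W - lossCE x y W' = (1 / n : ℝ) * ∑ i,
      (Real.log (softmax (logits W' (x i)) (y i)) - Real.log (softmax (logits W (x i)) (y i))) := by
  simp only [lossCE, Finset.sum_sub_distrib]
  ring

theorem lossCE_lipschitz_general (n k d : ℕ)
    (x : Fin n → Fin d → ℝ) (y : Fin n → Fin k)
    (R : ℝ) (hR : 0 < R) (hx : ∀ i, norm1V (x i) ≤ R)
    (W W' : Fin k → Fin d → ℝ) :
    |lossCE x y W - lossCE x y W'| ≤ 2 * R * ‖W - W'‖ := by
  rw [lossCE_sub]
  refine abs_mean_le (by positivity) fun i => ?_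
  calc _ ≤ 2 * norm1V (x i) * ‖W' - W‖ := abs_log_softmax_logits_sub_le W' W (x i) (y i)
    _ ≤ 2 * R * ‖W - W'‖ := by
      rw [norm_sub_rev]
      gcongr
      exact hx i

/-- Lipschitz bound `|L(W) − L(W')| ≤ 2R ‖W − W'‖_max`. -/
theorem lossCE_lipschitz (n k d : ℕ) (hn : 1 ≤ n) (hk : 2 ≤ k) (hd : 1 ≤ d)
    (x : Fin n → Fin d → ℝ) (y : Fin n → Fin k)
    (R : ℝ) (hR : 0 < R) (hx : ∀ i, norm1V (x i) ≤ R)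
    (W W' : Fin k → Fin d → ℝ) :
    |lossCE x y W - lossCE x y W'| ≤ 2 * R * ‖W - W'‖ :=
  lossCE_lipschitz_general n k d x y R hR hx W W'
end

section
/- For every W ∈ ℝ^{k×d}: if L(W) ≤ (log 2)/n then L(W) ≤ 2 G(W); and if G(W) ≤ 1/(2n) then L(W) ≤ 2 G(W). -/
open Finset Filter

/-! Either hypothesis bounds the sum over samples of the nonnegative per-sample terms
(`-log pᵢ` resp. `1 - pᵢ`, with `pᵢ` the softmax probability of the true label), hence each
term, by `log 2` resp. `1/2`; both say `pᵢ ≥ 1/2`. On `[1/2, 1]` one has `-log p ≤ 2 (1 - p)`,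
and averaging over the samples gives `L ≤ 2 G`. -/

section Softmax

variable {k : ℕ} (z : Fin k → ℝ) (c : Fin k)

lemma exp_le_sum_exp : Real.exp (z c) ≤ ∑ j, Real.exp (z j) :=
  Finset.single_le_sum (fun j _ => (Real.exp_pos (z j)).le) (Finset.mem_univ c)

lemma softmax_pos_s9 : 0 < softmax z c :=
  div_pos (Real.exp_pos _) ((Real.exp_pos _).trans_le (exp_le_sum_exp z c))

lemma softmax_le_one : softmax z c ≤ 1 :=
  div_le_one_of_le₀ (exp_le_sum_exp z c) ((Real.exp_pos _).le.trans (exp_le_sum_exp z c))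

end Softmax

/-- From `log (1/p) ≤ 1/p - 1 = (1 - p)/p` and `1/p ≤ 2`. -/
lemma neg_log_le_two_mul_one_sub {p : ℝ} (hp : 1 / 2 ≤ p) (hp1 : p ≤ 1) :
    -Real.log p ≤ 2 * (1 - p) := by
  have hp0 : 0 < p := by linarith
  have hlog : -Real.log p ≤ p⁻¹ - 1 := by
    simpa only [Real.log_inv] using Real.log_le_sub_one_of_pos (inv_pos.mpr hp0)
  have hinv : p⁻¹ - 1 = (1 - p) / p := by field_simp
  have hdiv : (1 - p) / p ≤ 2 * (1 - p) := by
    rw [div_le_iff₀ hp0]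
    nlinarith
  linarith

lemma le_of_mean_le {n : ℕ} {f : Fin n → ℝ} {c : ℝ} (hf : ∀ i, 0 ≤ f i)
    (h : 1 / (n : ℝ) * ∑ i, f i ≤ c / n) (i : Fin n) : f i ≤ c := by
  have hn : (0 : ℝ) < n := by exact_mod_cast i.pos
  calc f i ≤ ∑ j, f j := Finset.single_le_sum (fun j _ => hf j) (Finset.mem_univ i)
    _ ≤ c := by rwa [one_div_mul_eq_div, div_le_div_iff_of_pos_right hn] at h

section Classifier

variable {n k d : ℕ} (x : Fin n → Fin d → ℝ) (y : Fin n → Fin k) (W : Fin k → Fin d → ℝ)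

lemma lossCE_eq_mean_neg_log :
    lossCE x y W = 1 / (n : ℝ) * ∑ i, -Real.log (softmax (logits W (x i)) (y i)) := by
  rw [lossCE, Finset.sum_neg_distrib, neg_mul, mul_neg]

lemma lossCE_le_two_mul_proxyG_of_half_le_softmax
    (h : ∀ i, 1 / 2 ≤ softmax (logits W (x i)) (y i)) :
    lossCE x y W ≤ 2 * proxyG x y W := by
  rw [lossCE_eq_mean_neg_log, proxyG, mul_left_comm, Finset.mul_sum _ _ 2]
  gcongr with i
  exact neg_log_le_two_mul_one_sub (h i) (softmax_le_one _ _)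

lemma half_le_softmax_of_lossCE_le (h : lossCE x y W ≤ Real.log 2 / n) (i : Fin n) :
    1 / 2 ≤ softmax (logits W (x i)) (y i) := by
  have hp := softmax_pos_s9 (logits W (x i)) (y i)
  have hterm : -Real.log (softmax (logits W (x i)) (y i)) ≤ Real.log 2 := by
    refine le_of_mean_le (fun j => ?_) (by rwa [← lossCE_eq_mean_neg_log]) i
    exact neg_nonneg.mpr (Real.log_nonpos (softmax_pos_s9 _ _).le (softmax_le_one _ _))
  rw [one_div, ← Real.log_le_log_iff (by norm_num) hp, Real.log_inv]
  linarith

lemma half_le_softmax_of_proxyG_le (h : proxyG x y W ≤ 1 / (2 * n)) (i : Fin n) :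
    1 / 2 ≤ softmax (logits W (x i)) (y i) := by
  have hterm : 1 - softmax (logits W (x i)) (y i) ≤ 1 / 2 :=
    le_of_mean_le (f := fun j => 1 - softmax (logits W (x j)) (y j))
      (fun j => sub_nonneg.mpr (softmax_le_one _ _))
      (by rwa [div_div]) i
  linarith

end Classifier

theorem loss_le_two_proxy_general (n k d : ℕ)
    (x : Fin n → Fin d → ℝ) (y : Fin n → Fin k) (W : Fin k → Fin d → ℝ) :
    (lossCE x y W ≤ Real.log 2 / n → lossCE x y W ≤ 2 * proxyG x y W)
    ∧ (proxyG x y W ≤ 1 / (2 * n) → lossCE x y W ≤ 2 * proxyG x y W) :=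
  ⟨fun h => lossCE_le_two_mul_proxyG_of_half_le_softmax x y W
      (half_le_softmax_of_lossCE_le x y W h),
    fun h => lossCE_le_two_mul_proxyG_of_half_le_softmax x y W
      (half_le_softmax_of_proxyG_le x y W h)⟩

/-- if `L(W) ≤ (log 2)/n` or `G(W) ≤ 1/(2n)` then `L(W) ≤ 2 G(W)`. -/
theorem loss_le_two_proxy (n k d : ℕ) (hn : 1 ≤ n) (hk : 2 ≤ k) (hd : 1 ≤ d)
    (x : Fin n → Fin d → ℝ) (y : Fin n → Fin k) (W : Fin k → Fin d → ℝ) :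
    (lossCE x y W ≤ Real.log 2 / n → lossCE x y W ≤ 2 * proxyG x y W)
    ∧ (proxyG x y W ≤ 1 / (2 * n) → lossCE x y W ≤ 2 * proxyG x y W) :=
  loss_le_two_proxy_general n k d x y W
end

section
/- Let c > 0 and a ∈ (0,1]. Define η : ℕ → ℝ by η_t = c·t^{−a} for t ≥ 1, and let η_0 be any real number with 0 ≤ η_0 ≤ c. Then for every β ∈ (0,1) and every c₁ > 0, there exist t₀ ∈ ℕ and c₂ > 0 such that for all t ≥ t₀: ∑_{s=0}^{t} β^s (exp(c₁ ∑_{τ=1}^{s} η_{t−τ}) − 1) ≤ c₂ · η_t. -/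
open Finset Filter

open Real Topology

/-!
Split the sum at `s = t / 2`. For `s ≤ t / 2` every index `t - τ` lies in `[t / 2, t]`, where
`η ≤ 2 ^ a η_t`; with `e^y - 1 ≤ y e^y` the `s`-th term is at most
`c₁ 2 ^ a η_t · s · (β e^{c₁ 2 ^ a η_t}) ^ s`, and once `η_t` is small the base is below
`β ^ (1/4)`, so these terms sum to `O(η_t)`. For `s > t / 2` the factor `β ^ s` is exponentially small, while the
exponent `c₁ ∑_{n<t} |η_n|` is `o(t)` by Cesàro, so these terms sum to less than `η_t`, which decays
only polynomially.
-/

lemma exp_sub_one_le_mul_exp (x : ℝ) : exp x - 1 ≤ x * exp x := by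
  have h : exp (-x) * exp x = 1 := by rw [← exp_add, neg_add_cancel, exp_zero]
  nlinarith [add_one_le_exp (-x), exp_pos x]

lemma sum_pow_mul_exp_sub_one_le {β r A : ℝ} {y : ℕ → ℝ} {n : ℕ} (hβ : 0 ≤ β) (hr : r < 1)
    (hA : 0 ≤ A) (hβA : β * exp A ≤ r) (hy : ∀ s ∈ range n, 0 ≤ y s ∧ y s ≤ s * A) :
    ∑ s ∈ range n, β ^ s * (exp (y s) - 1) ≤ A * (r / (1 - r) ^ 2) := by
  have hr0 : 0 ≤ r := (mul_nonneg hβ (exp_pos A).le).trans hβA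
  have hsum : HasSum (fun s : ℕ => A * (s * r ^ s)) (A * (r / (1 - r) ^ 2)) :=
    (hasSum_coe_mul_geometric_of_norm_lt_one (by rwa [norm_of_nonneg hr0])).mul_left A
  refine (sum_le_sum fun s hs => ?_).trans (sum_le_hasSum _ (fun s _ => by positivity) hsum)
  obtain ⟨hy0, hyA⟩ := hy s hs
  calc β ^ s * (exp (y s) - 1) ≤ β ^ s * (s * A * exp (s * A)) := by
        gcongr
        exact (exp_sub_one_le_mul_exp _).trans (by gcongr)
    _ = A * (s * (β * exp A) ^ s) := by rw [mul_pow, ← exp_nat_mul]; ring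
    _ ≤ A * (s * r ^ s) := by gcongr

lemma sum_Ico_pow_mul_exp_sub_one_le {β Y : ℝ} {y : ℕ → ℝ} {m n : ℕ} (hβ0 : 0 ≤ β)
    (hβ1 : β < 1) (hy : ∀ s ∈ Ico m n, y s ≤ Y) :
    ∑ s ∈ Ico m n, β ^ s * (exp (y s) - 1) ≤ β ^ m * exp Y / (1 - β) :=
  calc ∑ s ∈ Ico m n, β ^ s * (exp (y s) - 1) ≤ ∑ s ∈ Ico m n, β ^ s * exp Y :=
        sum_le_sum fun s hs => by gcongr; linarith [exp_le_exp.2 (hy s hs)]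
    _ = (∑ s ∈ Ico m n, β ^ s) * exp Y := by rw [sum_mul]
    _ ≤ β ^ m / (1 - β) * exp Y := by gcongr; exact geom_sum_Ico_le_of_lt_one hβ0 hβ1
    _ = β ^ m * exp Y / (1 - β) := by ring

lemma sum_Icc_sub_le_sum_range_abs (η : ℕ → ℝ) {s t : ℕ} (hst : s ≤ t) :
    ∑ τ ∈ Icc 1 s, η (t - τ) ≤ ∑ n ∈ range t, |η n| :=
  calc ∑ τ ∈ Icc 1 s, η (t - τ) ≤ ∑ τ ∈ Icc 1 s, |η (t - τ)| :=
        sum_le_sum fun _ _ => le_abs_self _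
    _ = ∑ n ∈ (Icc 1 s).image (t - ·), |η n| :=
        (sum_image (f := fun n => |η n|) fun x hx y hy h => by
          simp only [mem_coe, mem_Icc] at hx hy; omega).symm
    _ ≤ ∑ n ∈ range t, |η n| :=
        sum_le_sum_of_subset_of_nonneg
          (by intro n; simp only [mem_image, mem_Icc, mem_range]; omega) fun _ _ _ => abs_nonneg _

theorem stepsize_sum_le (η : ℕ → ℝ) {β ρ c₁ C : ℝ} {t : ℕ} (hβ0 : 0 ≤ β) (hβ1 : β < 1)
    (hρ : ρ < 1) (hc₁ : 0 ≤ c₁) (hη : ∀ n, t ≤ 2 * n → n ≤ t → 0 ≤ η n ∧ η n ≤ C * η t)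
    (hβρ : β * exp (c₁ * (C * η t)) ≤ ρ) :
    ∑ s ∈ range (t + 1), β ^ s * (exp (c₁ * ∑ τ ∈ Icc 1 s, η (t - τ)) - 1)
      ≤ c₁ * (C * η t) * (ρ / (1 - ρ) ^ 2)
        + β ^ (t / 2 + 1) * exp (c₁ * ∑ n ∈ range t, |η n|) / (1 - β) := by
  rw [← sum_range_add_sum_Ico _ (by omega : t / 2 + 1 ≤ t + 1)]
  have hCη : 0 ≤ C * η t := by
    obtain ⟨h0, hle⟩ := hη t (by omega) le_rfl
    linarith
  gcongr ?_ + ?_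
  · refine sum_pow_mul_exp_sub_one_le hβ0 hρ (mul_nonneg hc₁ hCη) hβρ fun s hs => ?_
    have hτ : ∀ τ ∈ Icc 1 s, 0 ≤ η (t - τ) ∧ η (t - τ) ≤ C * η t := fun τ hτ => by
      simp only [mem_Icc, mem_range] at hs hτ
      exact hη _ (by omega) (by omega)
    refine ⟨mul_nonneg hc₁ (sum_nonneg fun τ h => (hτ τ h).1), ?_⟩
    calc c₁ * ∑ τ ∈ Icc 1 s, η (t - τ) ≤ c₁ * (#(Icc 1 s) • (C * η t)) := by
          gcongr; exact sum_le_card_nsmul _ _ _ fun τ h => (hτ τ h).2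
      _ = s * (c₁ * (C * η t)) := by simp only [Nat.card_Icc, nsmul_eq_mul]; push_cast; ring
  · refine sum_Ico_pow_mul_exp_sub_one_le hβ0 hβ1 fun s hs => ?_
    gcongr
    exact sum_Icc_sub_le_sum_range_abs η (by simp only [mem_Ico] at hs; omega)

lemma eventually_sum_range_le_mul {u : ℕ → ℝ} (hu : Tendsto u atTop (𝓝 0)) {ε : ℝ}
    (hε : 0 < ε) : ∀ᶠ t : ℕ in atTop, ∑ n ∈ range t, u n ≤ ε * t := by
  filter_upwards [hu.cesaro.eventually_le_const hε, eventually_gt_atTop 0] with t ht ht0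
  rw [inv_mul_le_iff₀ (by positivity), mul_comm] at ht
  exact ht

lemma pow_div_two_add_one_le_exp {β : ℝ} (hβ0 : 0 < β) (hβ1 : β ≤ 1) (t : ℕ) :
    β ^ (t / 2 + 1) ≤ exp (t * log β / 2) := by
  rw [← exp_log (pow_pos hβ0 _), log_pow, exp_le_exp]
  have ht : (t : ℝ) ≤ 2 * ((t / 2 + 1 : ℕ) : ℝ) := by
    exact_mod_cast (by omega : t ≤ 2 * (t / 2 + 1))
  nlinarith [log_nonpos hβ0.le hβ1]

lemma eventually_pow_mul_exp_sum_abs_le {η : ℕ → ℝ} (hlim : Tendsto η atTop (𝓝 0))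
    (hslow : ∀ ρ, 0 < ρ → ρ < 1 → ∀ᶠ t : ℕ in atTop, ρ ^ t ≤ η t) {β : ℝ} (hβ0 : 0 < β)
    (hβ1 : β < 1) (c₁ : ℝ) :
    ∀ᶠ t : ℕ in atTop, β ^ (t / 2 + 1) * exp (c₁ * ∑ n ∈ range t, |η n|) ≤ η t := by
  have hlogβ := log_neg hβ0 hβ1
  have habs : Tendsto (fun n => c₁ * |η n|) atTop (𝓝 0) := by simpa using hlim.abs.const_mul c₁
  filter_upwards [eventually_sum_range_le_mul habs (ε := -log β / 4) (by linarith),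
    hslow (exp (log β / 4)) (exp_pos _) (exp_lt_one_iff.2 (by linarith))] with t hsum hρ
  calc β ^ (t / 2 + 1) * exp (c₁ * ∑ n ∈ range t, |η n|)
      ≤ exp (t * log β / 2) * exp (-log β / 4 * t) := by
        rw [mul_sum]
        gcongr ?_ * exp ?_
        exact pow_div_two_add_one_le_exp hβ0 hβ1.le t
    _ = exp (log β / 4) ^ t := by rw [← exp_add, ← exp_nat_mul]; ring_nf
    _ ≤ η t := hρ

theorem exists_stepsize_bound_of_tendsto_zero {η : ℕ → ℝ} (hlim : Tendsto η atTop (𝓝 0))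
    {C : ℝ} (hC : 0 ≤ C)
    (hdoubling : ∀ᶠ t : ℕ in atTop, ∀ n, t ≤ 2 * n → n ≤ t → 0 ≤ η n ∧ η n ≤ C * η t)
    (hslow : ∀ ρ, 0 < ρ → ρ < 1 → ∀ᶠ t : ℕ in atTop, ρ ^ t ≤ η t)
    {β : ℝ} (hβ0 : 0 < β) (hβ1 : β < 1) {c₁ : ℝ} (hc₁ : 0 ≤ c₁) :
    ∃ t₀ : ℕ, ∃ c₂ : ℝ, 0 < c₂ ∧ ∀ t : ℕ, t₀ ≤ t →
      ∑ s ∈ range (t + 1), β ^ s * (exp (c₁ * ∑ τ ∈ Icc 1 s, η (t - τ)) - 1) ≤ c₂ * η t := by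
  -- `ρ = β ^ (1/4)` is the geometric rate used for both halves of the sum.
  set ρ := exp (log β / 4)
  have hlogβ := log_neg hβ0 hβ1
  have hρ1 : ρ < 1 := exp_lt_one_iff.2 (by linarith)
  have hβρ : β < ρ := by
    conv_lhs => rw [← exp_log hβ0]
    exact exp_lt_exp.2 (by linarith)
  have hsmall : ∀ᶠ t : ℕ in atTop, β * exp (c₁ * (C * η t)) ≤ ρ := by
    have h : Tendsto (fun t => β * exp (c₁ * (C * η t))) atTop (𝓝 β) := by
      simpa using ((hlim.const_mul C).const_mul c₁).rexp.const_mul β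
    exact h.eventually_le_const hβρ
  obtain ⟨t₀, ht₀⟩ := eventually_atTop.1 <| hdoubling.and <|
    hsmall.and (eventually_pow_mul_exp_sum_abs_le hlim hslow hβ0 hβ1 c₁)
  refine ⟨t₀, c₁ * C * (ρ / (1 - ρ) ^ 2) + 1 / (1 - β),
    add_pos_of_nonneg_of_pos (by positivity) (one_div_pos.2 (sub_pos.2 hβ1)), fun t ht => ?_⟩
  obtain ⟨hη, hβρt, htail⟩ := ht₀ t ht
  calc _ ≤ _ := stepsize_sum_le η hβ0.le hβ1 hρ1 hc₁ hη hβρt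
    _ ≤ c₁ * (C * η t) * (ρ / (1 - ρ) ^ 2) + η t / (1 - β) := by gcongr
    _ = _ := by ring

lemma rpow_neg_le_two_rpow_mul {a : ℝ} (ha : 0 ≤ a) {n t : ℕ} (ht : 0 < t) (htn : t ≤ 2 * n) :
    (n : ℝ) ^ (-a) ≤ 2 ^ a * (t : ℝ) ^ (-a) := by
  have htn' : (t : ℝ) ≤ 2 * n := by exact_mod_cast htn
  calc (n : ℝ) ^ (-a) = 2 ^ a * (2 * n : ℝ) ^ (-a) := by
        rw [mul_rpow (by norm_num) (by positivity), ← mul_assoc, ← rpow_add (by norm_num),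
          add_neg_cancel, rpow_zero, one_mul]
    _ ≤ 2 ^ a * (t : ℝ) ^ (-a) :=
        mul_le_mul_of_nonneg_left (rpow_le_rpow_of_nonpos (by exact_mod_cast ht) htn'
          (neg_nonpos.2 ha)) (by positivity)

lemma eventually_pow_le_const_mul_rpow_neg {c : ℝ} (hc : 0 < c) (a : ℝ) {ρ : ℝ} (hρ0 : 0 < ρ)
    (hρ1 : ρ < 1) : ∀ᶠ t : ℕ in atTop, ρ ^ t ≤ c * (t : ℝ) ^ (-a) := by
  have h := (tendsto_rpow_mul_exp_neg_mul_atTop_nhds_zero a (-log ρ)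
    (by linarith [log_neg hρ0 hρ1])).comp tendsto_natCast_atTop_atTop
  filter_upwards [h.eventually_le_const hc, eventually_gt_atTop 0] with t ht ht0
  simp only [Function.comp_apply, neg_neg] at ht
  rw [rpow_neg (by positivity), ← div_eq_mul_inv, le_div_iff₀ (by positivity), ← exp_log hρ0,
    ← exp_nat_mul, mul_comm (t : ℝ)]
  linarith

theorem stepsize_condition_polynomial_decay_general (c : ℝ) (hc : 0 < c)
    (a : ℝ) (ha0 : 0 < a)
    (η : ℕ → ℝ) (hη : ∀ t : ℕ, 1 ≤ t → η t = c * (t : ℝ) ^ (-a))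
    (β : ℝ) (hβ0 : 0 < β) (hβ1 : β < 1)
    (c₁ : ℝ) (hc₁ : 0 < c₁) :
    ∃ t₀ : ℕ, ∃ c₂ : ℝ, 0 < c₂ ∧ ∀ t : ℕ, t₀ ≤ t →
      ∑ s ∈ Finset.range (t + 1),
          β ^ s * (Real.exp (c₁ * ∑ τ ∈ Finset.Icc 1 s, η (t - τ)) - 1)
        ≤ c₂ * η t := by
  have hη_ev : (fun t : ℕ => c * (t : ℝ) ^ (-a)) =ᶠ[atTop] η :=
    eventually_atTop.2 ⟨1, fun t ht => (hη t ht).symm⟩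
  refine exists_stepsize_bound_of_tendsto_zero ?_ (by positivity : (0 : ℝ) ≤ 2 ^ a) ?_
    (fun ρ hρ0 hρ1 => ?_) hβ0 hβ1 hc₁.le
  · refine Tendsto.congr' hη_ev ?_
    simpa using ((tendsto_rpow_neg_atTop ha0).comp tendsto_natCast_atTop_atTop).const_mul c
  · filter_upwards [eventually_ge_atTop 1] with t ht n htn hnt
    rw [hη n (by omega), hη t ht, mul_left_comm]
    exact ⟨by positivity, by gcongr; exact rpow_neg_le_two_rpow_mul ha0.le ht htn⟩
  · filter_upwards [eventually_pow_le_const_mul_rpow_neg hc a hρ0 hρ1, hη_ev] with t ht hηt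
    exact hηt ▸ ht

/-- the polynomially decaying step sizes `η_t = c t^{−a}` eventually
satisfy `∑_{s=0}^{t} β^s (exp(c₁ ∑_{τ=1}^{s} η_{t−τ}) − 1) ≤ c₂ η_t`. -/
theorem stepsize_condition_polynomial_decay (c : ℝ) (hc : 0 < c)
    (a : ℝ) (ha0 : 0 < a) (ha1 : a ≤ 1)
    (η : ℕ → ℝ) (hη : ∀ t : ℕ, 1 ≤ t → η t = c * (t : ℝ) ^ (-a))
    (hη00 : 0 ≤ η 0) (hη0c : η 0 ≤ c)
    (β : ℝ) (hβ0 : 0 < β) (hβ1 : β < 1)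
    (c₁ : ℝ) (hc₁ : 0 < c₁) :
    ∃ t₀ : ℕ, ∃ c₂ : ℝ, 0 < c₂ ∧ ∀ t : ℕ, t₀ ≤ t →
      ∑ s ∈ Finset.range (t + 1),
          β ^ s * (Real.exp (c₁ * ∑ τ ∈ Finset.Icc 1 s, η (t - τ)) - 1)
        ≤ c₂ * η t :=
  stepsize_condition_polynomial_decay_general c hc a ha0 η hη β hβ0 hβ1 c₁ hc₁
end
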